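/- (Unit-modulus column sums after CP-DFT combining.) Let N be a positive integer and a ∈ ℂ^N a unit-modulus vector. Then for all n, n' ∈ {0,…,N−1}, aᴴ · U_n^* · U_{n'}ᵀ · a = N if n = n' and 0 otherwise; equivalently, the quadratic form of (U_n U_{n'}ᴴ)^* at any unit-modulus vector equals N·δ_{n,n'}. -/

import Mathlib

open Matrix Complex Finset

/-- The normalized `N × N` DFT matrix: `U i j = ω^(i*j) / √N` with `ω = exp(2πi/N)`. -/
noncomputable def dftU (N : ℕ) : Matrix (Fin N) (Fin N) ℂ :=
  fun i j => Complex.exp (2 * Real.pi * Complex.I / (N : ℂ)) ^ (i.val * j.val) / (Real.sqrt N : ℂ)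

/-- The `n`-th circulant-permutation DFT (CP-DFT) matrix:
`U_n i j = U i ((j + n) mod N)`, where addition in `Fin N` is modulo `N`. -/
noncomputable def cpdft (N : ℕ) (n : Fin N) : Matrix (Fin N) (Fin N) ℂ :=
  fun i j => dftU N i (j + n)

/-! Shifting the columns of `U` by `n` multiplies row `i` by `ω^(i n)`, so `U_n = D_n U` with
`D_n = diag(ω^(i n))`. As `U` is unitary, `U_n^* U_{n'}ᵀ = D_n^* (U Uᴴ)ᵀ D_{n'} = D_n^* D_{n'}` is
diagonal, and at a unit-modulus vector its quadratic form is its trace `∑ᵢ ω^(i (n' - n))`, which is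
`N δ_{n,n'}` by orthogonality of the characters of `ℤ/N`. -/

lemma pow_val_fin_add {M : Type*} [Monoid M] {ζ : M} {N : ℕ} (hζ : ζ ^ N = 1) (j n : Fin N) :
    ζ ^ (j + n).val = ζ ^ j.val * ζ ^ n.val := by
  rw [Fin.val_add, ← pow_eq_pow_mod _ hζ, pow_add]

lemma sum_fin_pow_eq_ite {K : Type*} [Field K] [DecidableEq K] {r : K} {N : ℕ} (hr : r ^ N = 1) :
    ∑ k : Fin N, r ^ k.val = if r = 1 then (N : K) else 0 := by
  rw [Fin.sum_univ_eq_sum_range (r ^ ·)]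
  split_ifs with h
  · simp [h]
  · rw [geom_sum_eq h, hr, sub_self, zero_div]

lemma IsPrimitiveRoot.sum_star_pow_mul_pow {ζ : ℂ} {N : ℕ} (hζ : IsPrimitiveRoot ζ N)
    (p q : Fin N) :
    ∑ k : Fin N, star (ζ ^ (k.val * p.val)) * ζ ^ (k.val * q.val) =
      if p = q then (N : ℂ) else 0 := by
  have hζ0 : ζ ≠ 0 := hζ.ne_zero p.pos.ne'
  have hterm (k : Fin N) :
      star (ζ ^ (k.val * p.val)) * ζ ^ (k.val * q.val) = (ζ ^ q.val / ζ ^ p.val) ^ k.val := by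
    have hnorm : ‖ζ ^ (k.val * p.val)‖ = 1 := by rw [norm_pow, hζ.norm'_eq_one p.pos.ne', one_pow]
    rw [Complex.star_def, ← RCLike.inv_eq_conj hnorm, inv_mul_eq_div, pow_mul', pow_mul', div_pow]
  have hroot : (ζ ^ q.val / ζ ^ p.val) ^ N = 1 := by
    rw [div_pow, pow_right_comm, pow_right_comm ζ p.val, hζ.pow_eq_one, one_pow, one_pow, div_one]
  have hone : ζ ^ q.val / ζ ^ p.val = 1 ↔ p = q := by
    rw [div_eq_one_iff_eq (pow_ne_zero _ hζ0)]
    exact ⟨fun h => Fin.ext (hζ.pow_inj q.isLt p.isLt h).symm, fun h => h ▸ rfl⟩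
  simp only [hterm, sum_fin_pow_eq_ite hroot, hone]

lemma dftU_conjTranspose_mul_self (N : ℕ) : (dftU N)ᴴ * dftU N = 1 := by
  ext p q
  have hN : (N : ℂ) ≠ 0 := Nat.cast_ne_zero.mpr p.pos.ne'
  have hsqrt : star (Real.sqrt N : ℂ) * (Real.sqrt N : ℂ) = N := by
    rw [Complex.star_def, Complex.conj_ofReal, ← Complex.ofReal_mul,
      Real.mul_self_sqrt (Nat.cast_nonneg N), Complex.ofReal_natCast]
  simp only [mul_apply, conjTranspose_apply, dftU, star_div₀, div_mul_div_comm, hsqrt,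
    ← Finset.sum_div, (Complex.isPrimitiveRoot_exp N p.pos.ne').sum_star_pow_mul_pow, one_apply]
  split_ifs <;> simp [hN]

lemma dftU_mem_unitaryGroup (N : ℕ) : dftU N ∈ unitaryGroup (Fin N) ℂ :=
  mem_unitaryGroup_iff'.mpr (dftU_conjTranspose_mul_self N)

lemma cpdft_eq_diagonal_mul (N : ℕ) (n : Fin N) :
    cpdft N n = diagonal (fun i => exp (2 * Real.pi * I / N) ^ (i.val * n.val)) * dftU N := by
  ext i j
  have hroot : (exp (2 * Real.pi * I / N) ^ i.val) ^ N = 1 := by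
    rw [pow_right_comm, (Complex.isPrimitiveRoot_exp N i.pos.ne').pow_eq_one, one_pow]
  rw [diagonal_mul, cpdft, dftU, dftU, pow_mul, pow_val_fin_add hroot, ← pow_mul, ← pow_mul]
  ring

lemma Matrix.conjTranspose_transpose_diagonal_mul_mul_transpose_diagonal_mul
    {ι α : Type*} [Fintype ι] [DecidableEq ι] [CommRing α] [StarRing α] {U : Matrix ι ι α}
    (hU : U ∈ unitaryGroup ι α) (d d' : ι → α) :
    (diagonal d * U)ᴴᵀ * (diagonal d' * U)ᵀ = diagonal (star d * d') := by
  have hU' : Uᴴᵀ * Uᵀ = 1 := by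
    rw [← transpose_mul, ← star_eq_conjTranspose, mem_unitaryGroup_iff.mp hU, transpose_one]
  rw [conjTranspose_mul, transpose_mul, transpose_mul, diagonal_conjTranspose, diagonal_transpose,
    diagonal_transpose, Matrix.mul_assoc, ← Matrix.mul_assoc Uᴴᵀ, hU', Matrix.one_mul,
    diagonal_mul_diagonal]
  rfl

lemma Matrix.star_dotProduct_diagonal_mulVec_of_norm_eq_one {ι 𝕜 : Type*} [Fintype ι]
    [DecidableEq ι] [RCLike 𝕜] {a : ι → 𝕜} (ha : ∀ i, ‖a i‖ = 1) (d : ι → 𝕜) :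
    star a ⬝ᵥ (diagonal d *ᵥ a) = ∑ i, d i := by
  refine Finset.sum_congr rfl fun i _ => ?_
  rw [mulVec_diagonal, Pi.star_apply, mul_left_comm, RCLike.star_def, RCLike.conj_mul, ha,
    RCLike.ofReal_one, one_pow, mul_one]

theorem cpdft_quadform_delta_general (N : ℕ) (a : Fin N → ℂ)
    (ha : ∀ i, ‖a i‖ = 1) (n n' : Fin N) :
    star a ⬝ᵥ ((((cpdft N n)ᴴ)ᵀ * (cpdft N n')ᵀ).mulVec a) =
      if n = n' then (N : ℂ) else 0 := by
  rw [cpdft_eq_diagonal_mul, cpdft_eq_diagonal_mul,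
    conjTranspose_transpose_diagonal_mul_mul_transpose_diagonal_mul (dftU_mem_unitaryGroup N),
    star_dotProduct_diagonal_mulVec_of_norm_eq_one ha]
  exact (Complex.isPrimitiveRoot_exp N n.pos.ne').sum_star_pow_mul_pow n n'

/-- unit-modulus column sums after CP-DFT combining: for a unit-modulus
vector `a`, the quadratic form of `(U_n U_{n'}ᴴ)^* = U_n^* U_{n'}ᵀ` at `a` equals `N·δ_{n,n'}`:
`aᴴ · U_n^* · U_{n'}ᵀ · a = N` if `n = n'`, and `0` otherwise
(with `X^* = (Xᴴ)ᵀ` the entrywise conjugate). -/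
theorem cpdft_quadform_delta (N : ℕ) (hN : 0 < N) (a : Fin N → ℂ)
    (ha : ∀ i, ‖a i‖ = 1) (n n' : Fin N) :
    star a ⬝ᵥ ((((cpdft N n)ᴴ)ᵀ * (cpdft N n')ᵀ).mulVec a) =
      if n = n' then (N : ℂ) else 0 :=
  cpdft_quadform_delta_general N a ha n n'
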